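/- For all integers i, k with 0 ≤ i ≤ ⌊k/2⌋, the suffix of W_k of length |W_{k-2i}| equals 2i ⊕ W_{k-2i}. -/

import Mathlib

/-- The morphism `phi` on the alphabet `ℕ`: `phi (2i) = (2i)(2i+1)` and `phi (2i+1) = (2i+2)`. -/
def phi (a : ℕ) : List ℕ := if a % 2 = 0 then [a, a + 1] else [a + 1]

/-- The finite ZWW words: `W n = phi^n(0)`, so `W 0 = 0`, `W 1 = 01`, `W 2 = 012`, `W 3 = 01223`. -/
def W (n : ℕ) : List ℕ := (fun w => w.flatMap phi)^[n] [0]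

/-!
Since `phi (a + 2) = 2 ⊕ phi a`, the morphism commutes with the shift by `2`, and from
`W 2 = W 1 ++ 2 ⊕ W 0` one gets `W (n + 2) = W (n + 1) ++ 2 ⊕ W n` for all `n`. Hence `2 ⊕ W n`
is a suffix of `W (n + 2)`, and iterating, `2i ⊕ W n` is a suffix of `W (n + 2i)`.
-/

lemma phi_add_two (a : ℕ) : phi (a + 2) = (phi a).map (· + 2) := by
  unfold phi
  rw [Nat.add_mod_right]
  split <;> simp

lemma flatMap_phi_map_add_two (w : List ℕ) :
    (w.map (· + 2)).flatMap phi = (w.flatMap phi).map (· + 2) := by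
  induction w with
  | nil => rfl
  | cons a w ih => simp [phi_add_two, ih]

lemma W_succ (n : ℕ) : W (n + 1) = (W n).flatMap phi :=
  Function.iterate_succ_apply' _ _ _

lemma W_add_two (n : ℕ) : W (n + 2) = W (n + 1) ++ (W n).map (· + 2) := by
  induction n with
  | zero => decide
  | succ n ih =>
    rw [W_succ (n + 2), ih, List.flatMap_append, flatMap_phi_map_add_two, ← W_succ, ← W_succ, ih,
      List.append_assoc]

lemma map_add_two_W_suffix (n : ℕ) : (W n).map (· + 2) <:+ W (n + 2) := by
  rw [W_add_two]
  exact List.suffix_append _ _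

lemma map_add_two_mul_W_suffix (n i : ℕ) : (W n).map (· + 2 * i) <:+ W (n + 2 * i) := by
  induction i with
  | zero => simp
  | succ i ih =>
    have hshift : (W n).map (· + 2 * (i + 1)) = ((W n).map (· + 2 * i)).map (· + 2) := by
      simp only [List.map_map]
      rfl
    rw [hshift, show n + 2 * (i + 1) = n + 2 * i + 2 by ring]
    exact (ih.map _).trans (map_add_two_W_suffix _)

/-- For `0 ≤ i ≤ ⌊k/2⌋` (i.e. `2i ≤ k`), the suffix of `W k` of length `|W (k - 2i)|`
equals `2i ⊕ W (k - 2i)`. -/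
theorem zww_suffix : ∀ i k : ℕ, 2 * i ≤ k →
    (W k).drop ((W k).length - (W (k - 2 * i)).length) =
      (W (k - 2 * i)).map (· + 2 * i) := by
  intro i k hik
  have hsuffix := map_add_two_mul_W_suffix (k - 2 * i) i
  rw [Nat.sub_add_cancel hik, List.suffix_iff_eq_drop, List.length_map] at hsuffix
  exact hsuffix.symm
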